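/- Let s : ℕ → ℕ be a function with s(n) → ∞ and s(n) = o(n) as n → ∞, and suppose G = (V(Q_n), E′) is a spanning subgraph of the hypercube Q_n with minimum degree at least n − s(n). For a vertex v ∈ V(Q_n), let R_0(v) = {v}, and recursively for i ≥ 1 let R_i(v) = { w ∈ Γ^i_{Q_n}(v) : Γ_{Q_n}(w) ∩ Γ^{i−1}_{Q_n}(v) = Γ_G(w) ∩ R_{i−1}(v) }. Then for every v ∈ V(Q_n) and every k ≥ 1, |R_k(v)| ≥ binom(n,k) − e·n^(k−1)·s(n), where e is Euler's number. -/

import Mathlib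

/-!
Call `w` at distance `k` from `v` non-rigid if `w ∉ R_k(v)`, and let `b_k` count these vertices.
A non-rigid `w` at distance `k + 1` has a `Q_n`-neighbour `x` at distance `k` for which either
`xw` is an edge of `Q_n` missing from `G`, or `x` is itself non-rigid. Each `x` misses at most
`s` edges, so `b_{k+1} ≤ s·C(n,k) + n·b_k` with `b_0 = 0`; since `C(n,k) ≤ n^k / k!`, unrolling
gives `b_{k+1} ≤ s·n^k·∑_{j ≤ k} 1/j! ≤ e·s·n^k`, and `|R_k(v)| = C(n,k) - b_k`.
-/

open MeasureTheory Filter Set Asymptotics Topology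

noncomputable section

/-- Vertices of the `n`-dimensional hypercube. -/
abbrev V (n : ℕ) : Type := Fin n → Bool

/-- The hypercube graph `Q_n`. -/
def Q (n : ℕ) : SimpleGraph (V n) :=
  SimpleGraph.fromRel (fun u v => hammingDist u v = 1)

/-- The neighbourhood of a vertex in `Q_n`. -/
def nbhd (n : ℕ) (v : V n) : Set (V n) := (Q n).neighborSet v

/-- The neighbourhood of a set of vertices. -/
def nbhdSet (n : ℕ) (A : Set (V n)) : Set (V n) := ⋃ v ∈ A, nbhd n v

/-- The set of vertices at graph distance exactly `k` from the set `A`. -/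
def sphereSet (n k : ℕ) (A : Set (V n)) : Set (V n) :=
  {w | (∃ v ∈ A, (Q n).dist v w = k) ∧ ∀ v ∈ A, k ≤ (Q n).dist v w}

/-- The ball of radius `r` about `v` (as a set of vertices). -/
def ball (n : ℕ) (v : V n) (r : ℕ) : Set (V n) := {w | (Q n).dist v w ≤ r}

/-- `χ^(r)(u) ≅ lam^(r)(w)` : the coloured `r`-balls around `u` (coloured by `χ`) and
`w` (coloured by `lam`) are isomorphic as coloured graphs. -/
def LocallyEq {C : Type} (n r : ℕ) (χ lam : V n → C) (u w : V n) : Prop :=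
  ∃ φ : ((Q n).induce (ball n u r)) ≃g ((Q n).induce (ball n w r)),
    ∀ x : ball n u r, χ x.1 = lam ((φ x).1)

/-- `d(χ^(r)(u), lam^(r)(w)) ≤ m` : some isomorphism of the `r`-balls realises at most `m`
colour disagreements. -/
def BallDistLE {C : Type} (n r : ℕ) (χ lam : V n → C) (u w : V n) (m : ℝ) : Prop :=
  ∃ φ : ((Q n).induce (ball n u r)) ≃g ((Q n).induce (ball n w r)),
    (({x : ball n u r | χ x.1 ≠ lam ((φ x).1)}.ncard : ℝ)) ≤ m

/-- A colouring is `r`-distinguishable if every `r`-locally equivalent colouring is obtained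
from it by a graph automorphism. -/
def Distinguishable {C : Type} (n r : ℕ) (χ : V n → C) : Prop :=
  ∀ lam : V n → C,
    (∃ f : V n ≃ V n, ∀ v, LocallyEq n r χ lam v (f v)) →
    ∃ g : (Q n) ≃g (Q n), lam = fun v => χ (g.symm v)

/-- `Isom^(r)(χ)` : the set of bijections `f` with `χ^(r)(v) ≅ (χ ∘ f⁻¹)^(r)(f v)` for all `v`. -/
def IsomSet {C : Type} (n r : ℕ) (χ : V n → C) : Set (V n ≃ V n) :=
  {f | ∀ v, LocallyEq n r χ (fun x => χ (f.symm x)) v (f v)}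

/-- `Cluster^r_R` : bijections `h` such that `|Γ^r(h(Γ(v)))| ≤ binom(n, r+1) + R` for all `v`. -/
def ClusterSet (n r : ℕ) (R : ℝ) : Set (V n ≃ V n) :=
  {h | ∀ v, ((sphereSet n r (⇑h '' nbhd n v)).ncard : ℝ) ≤ (n.choose (r+1) : ℝ) + R}

/-- `g` is a dual of `f` (at level `s`): `|f(Γ(v)) ∩ Γ(g(v))| ≥ n − s` for all `v`. -/
def IsDualF (n : ℕ) (s : ℝ) (f g : V n → V n) : Prop :=
  ∀ v, (n : ℝ) - s ≤ (((f '' nbhd n v) ∩ nbhd n (g v)).ncard : ℝ)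

/-- `f` is `s`-approximately local: it has a dual at level `s`. -/
def ApproxLocalF (n : ℕ) (s : ℝ) (f : V n → V n) : Prop :=
  ∃ g : V n → V n, IsDualF n s f g

/-- `Local_s` : the set of `s`-approximately local bijections. -/
def LocalSet (n : ℕ) (s : ℝ) : Set (V n ≃ V n) :=
  {f | ApproxLocalF n s ⇑f}

/-- `Mono^t_s` : bijections in `Cluster¹_s` for which, for every `v`, at most one vertex `w`
has `|f(Γ(v)) ∩ Γ(w)| > t`. -/
def MonoSet (n : ℕ) (s t : ℝ) : Set (V n ≃ V n) :=
  {f | f ∈ ClusterSet n 1 s ∧ ∀ v w₁ w₂ : V n,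
      t < (((⇑f '' nbhd n v) ∩ nbhd n w₁).ncard : ℝ) →
      t < (((⇑f '' nbhd n v) ∩ nbhd n w₂).ncard : ℝ) → w₁ = w₂}

/-- The dual `f_⋆` of `f` : for each `v`, a vertex `w` maximising `|f(Γ(v)) ∩ Γ(w)|`
(which is the unique dual vertex whenever `f` is `s`-approximately local with `s < n/2`). -/
def dualF (n : ℕ) (f : V n → V n) : V n → V n :=
  fun v => Classical.epsilon fun w =>
    ∀ w', ((f '' nbhd n v) ∩ nbhd n w').ncard ≤ ((f '' nbhd n v) ∩ nbhd n w).ncard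

/-- The Bernoulli measure on `Bool`: `false` (colour 0) has probability `p`,
`true` (colour 1) has probability `1 - p`. -/
def bern (p : ℝ) : Measure Bool :=
  ENNReal.ofReal p • Measure.dirac false + ENNReal.ofReal (1 - p) • Measure.dirac true

/-- The law of a random `(p, 1-p)`-colouring of `Q_n`: i.i.d. Bernoulli colours. -/
def colMeasure (n : ℕ) (p : ℝ) : Measure (V n → Bool) :=
  Measure.pi fun _ => bern p

/-- The uniform measure on `Fin q`. -/
def unifFin (q : ℕ) : Measure (Fin q) :=
  ((q : ENNReal))⁻¹ • Measure.count

/-- The law of a random `q`-colouring of `Q_n`: i.i.d. uniform colours. -/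
def qColMeasure (n q : ℕ) : Measure (V n → Fin q) :=
  Measure.pi fun _ => unifFin q

/-- The rigid sets `R_i(v)` determined by a spanning subgraph `G` of `Q_n`:
`R_0(v) = {v}` and `R_i(v)` consists of those `w` at distance exactly `i` from `v` in `Q_n`
with `Γ_{Q_n}(w) ∩ Γ^{i-1}_{Q_n}(v) = Γ_G(w) ∩ R_{i-1}(v)`. -/
def Rset (n : ℕ) (G : SimpleGraph (V n)) (v : V n) : ℕ → Set (V n)
  | 0 => {v}
  | (i + 1) => {w | (Q n).dist v w = i + 1 ∧
      (Q n).neighborSet w ∩ {x | (Q n).dist v x = i} =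
        G.neighborSet w ∩ Rset n G v i}

section Hypercube

open Finset

variable {n : ℕ}

lemma Q_adj_iff {u w : V n} : (Q n).Adj u w ↔ hammingDist u w = 1 := by
  simp only [Q, SimpleGraph.fromRel_adj, hammingDist_comm w u, or_self]
  exact ⟨And.right, fun h => ⟨hammingDist_ne_zero.1 (by omega), h⟩⟩

lemma hammingDist_le_length {u w : V n} (p : (Q n).Walk u w) : hammingDist u w ≤ p.length := by
  induction p with
  | nil => simp
  | @cons a b c hab p ih =>
    calc hammingDist a c ≤ hammingDist a b + hammingDist b c := hammingDist_triangle _ _ _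
      _ ≤ p.length + 1 := by rw [Q_adj_iff.1 hab]; omega

lemma exists_walk_length_eq_hammingDist (u w : V n) :
    ∃ p : (Q n).Walk u w, p.length = hammingDist u w := by
  induction h : hammingDist u w generalizing u with
  | zero =>
    obtain rfl := hammingDist_eq_zero.1 h
    exact ⟨.nil, rfl⟩
  | succ d ih =>
    obtain ⟨i, hi⟩ : ∃ i, u i ≠ w i := by
      by_contra! hc
      simp [funext hc] at h
    set u' := Function.update u i (w i)
    have hdiff : ({j | u' j ≠ w j} : Finset (Fin n)) = ({j | u j ≠ w j} : Finset _).erase i := by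
      ext j
      by_cases hj : j = i <;> simp [u', hj]
    have hu'w : hammingDist u' w = d := by
      have hi' : i ∈ ({j | u j ≠ w j} : Finset _) := by simpa using hi
      rw [hammingDist, hdiff, card_erase_of_mem hi']
      exact (congrArg (· - 1) h).trans (Nat.add_sub_cancel d 1)
    have huu' : (Q n).Adj u u' := by
      have hsingle : ({j | u j ≠ u' j} : Finset (Fin n)) = {i} := by
        ext j
        by_cases hj : j = i <;> simp [u', hj, hi]
      rw [Q_adj_iff, hammingDist, hsingle, Finset.card_singleton]
    obtain ⟨p, hp⟩ := ih u' hu'w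
    exact ⟨.cons huu' p, by simp [hp]⟩

lemma Q_dist_eq_hammingDist (u w : V n) : (Q n).dist u w = hammingDist u w := by
  obtain ⟨p, hp⟩ := exists_walk_length_eq_hammingDist u w
  obtain ⟨q, hq⟩ := SimpleGraph.Reachable.exists_walk_length_eq_dist ⟨p⟩
  exact le_antisymm (hp ▸ SimpleGraph.dist_le p) (hq ▸ hammingDist_le_length q)

def diffCoordsEquiv {ι : Type*} [Fintype ι] [DecidableEq ι] (v : ι → Bool) :
    (ι → Bool) ≃ Finset ι where
  toFun w := {j | v j ≠ w j}
  invFun T j := if j ∈ T then !v j else v j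
  left_inv w := by
    funext j
    cases hv : v j <;> cases hw : w j <;> simp [hv, hw]
  right_inv T := by
    ext j
    by_cases hj : j ∈ T <;> simp [hj]

lemma card_hammingDist_eq {ι : Type*} [Fintype ι] [DecidableEq ι] (v : ι → Bool) (k : ℕ) :
    #{w | hammingDist v w = k} = (Fintype.card ι).choose k := by
  rw [← card_univ, ← card_powersetCard]
  refine card_equiv (diffCoordsEquiv v) fun w => ?_
  simp [diffCoordsEquiv, mem_powersetCard, hammingDist]

open scoped Classical in
lemma card_Q_sphere (v : V n) (k : ℕ) : #{w | (Q n).dist v w = k} = n.choose k := by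
  simpa [Q_dist_eq_hammingDist] using card_hammingDist_eq v k

open scoped Classical in
lemma card_Q_neighbors (x : V n) : #{w | (Q n).Adj x w} = n := by
  simpa [Q_adj_iff] using card_hammingDist_eq x 1

end Hypercube

section Recurrence

open Finset
open scoped Nat

lemma le_mul_sum_inv_factorial_of_le_choose_add {n : ℕ} {s : ℝ} (hs : 0 ≤ s) {b : ℕ → ℝ}
    (h0 : b 0 = 0) (hstep : ∀ k, b (k + 1) ≤ s * n.choose k + n * b k) (k : ℕ) :
    b (k + 1) ≤ s * n ^ k * ∑ j ∈ range (k + 1), (j ! : ℝ)⁻¹ := by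
  induction k with
  | zero => simpa [h0] using hstep 0
  | succ k ih =>
    have hchoose : s * n.choose (k + 1) ≤ s * ((n : ℝ) ^ (k + 1) / (k + 1)!) :=
      mul_le_mul_of_nonneg_left (Nat.choose_le_pow_div (k + 1) n) hs
    calc b (k + 2) ≤ s * n.choose (k + 1) + n * b (k + 1) := hstep (k + 1)
      _ ≤ s * ((n : ℝ) ^ (k + 1) / (k + 1)!) +
          n * (s * n ^ k * ∑ j ∈ range (k + 1), (j ! : ℝ)⁻¹) := by gcongr
      _ = s * n ^ (k + 1) * ∑ j ∈ range (k + 2), (j ! : ℝ)⁻¹ := by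
        rw [sum_range_succ _ (k + 1)]; ring

lemma le_exp_one_mul_of_le_choose_add {n : ℕ} {s : ℝ} (hs : 0 ≤ s) {b : ℕ → ℝ}
    (h0 : b 0 = 0) (hstep : ∀ k, b (k + 1) ≤ s * n.choose k + n * b k) (k : ℕ) :
    b (k + 1) ≤ Real.exp 1 * n ^ k * s := by
  have hexp : ∑ j ∈ range (k + 1), (j ! : ℝ)⁻¹ ≤ Real.exp 1 := by
    simpa using Real.sum_le_exp_of_nonneg zero_le_one (k + 1)
  calc b (k + 1) ≤ s * n ^ k * ∑ j ∈ range (k + 1), (j ! : ℝ)⁻¹ :=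
        le_mul_sum_inv_factorial_of_le_choose_add hs h0 hstep k
    _ ≤ s * n ^ k * Real.exp 1 := by gcongr
    _ = Real.exp 1 * n ^ k * s := by ring

end Recurrence

section RigidSets

open Finset
open scoped Classical

variable {n : ℕ} {G : SimpleGraph (V n)} {v : V n}

lemma card_missingEdges_le (hG : G ≤ Q n) {s : ℝ} {x : V n}
    (hx : (n : ℝ) - s ≤ (G.neighborSet x).ncard) :
    (#{w | (Q n).Adj x w ∧ ¬G.Adj x w} : ℝ) ≤ s := by
  have hsplit : #{w | G.Adj x w} + #{w | (Q n).Adj x w ∧ ¬G.Adj x w} = n := by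
    have hGQ : ({w | (Q n).Adj x w ∧ G.Adj x w} : Finset (V n)) =
        ({w | G.Adj x w} : Finset (V n)) := by
      ext w
      simpa using fun h => hG h
    have := card_filter_add_card_filter_not (s := ({w | (Q n).Adj x w} : Finset (V n))) (G.Adj x)
    rwa [filter_filter, filter_filter, hGQ, card_Q_neighbors] at this
  have hncard : (G.neighborSet x).ncard = #{w | G.Adj x w} := by
    rw [← Set.ncard_coe_finset]
    congr
    ext w
    simp
  rw [hncard] at hx
  have := congrArg (Nat.cast : ℕ → ℝ) hsplit
  push_cast at this
  linarith

lemma Rset_subset (k : ℕ) : Rset n G v k ⊆ {w | (Q n).dist v w = k} := by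
  cases k with
  | zero => simp [Rset]
  | succ k => exact fun w hw => hw.1

def nonRigid (G : SimpleGraph (V n)) (v : V n) (k : ℕ) : Finset (V n) :=
  {w | (Q n).dist v w = k ∧ w ∉ Rset n G v k}

lemma ncard_Rset_add_card_nonRigid (k : ℕ) :
    (Rset n G v k).ncard + #(nonRigid G v k) = n.choose k := by
  have hR : Rset n G v k = ↑({w | (Q n).dist v w = k ∧ w ∈ Rset n G v k} : Finset (V n)) := by
    ext w
    simpa using fun hw => Rset_subset k hw
  rw [hR, Set.ncard_coe_finset, ← card_Q_sphere v k, nonRigid,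
    ← card_filter_add_card_filter_not (s := {w | (Q n).dist v w = k}) (· ∈ Rset n G v k),
    filter_filter, filter_filter]

lemma nonRigid_zero : nonRigid G v 0 = ∅ := by
  ext w
  simp [nonRigid, Rset, Q_dist_eq_hammingDist, eq_comm]

lemma exists_adj_of_mem_nonRigid_succ (hG : G ≤ Q n) {k : ℕ} {w : V n}
    (hw : w ∈ nonRigid G v (k + 1)) :
    ∃ x, (Q n).Adj x w ∧ (Q n).dist v x = k ∧ (¬G.Adj x w ∨ x ∈ nonRigid G v k) := by
  obtain ⟨-, hdist, hwR⟩ := mem_filter.1 hw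
  by_contra! h
  refine hwR ⟨hdist, Set.Subset.antisymm (fun x ⟨hadj, hx⟩ => ?_) fun x ⟨hadj, hx⟩ => ?_⟩
  · obtain ⟨hGadj, hxB⟩ := h x hadj.symm hx
    refine ⟨hGadj.symm, ?_⟩
    by_contra hxR
    exact hxB (mem_filter.2 ⟨mem_univ _, hx, hxR⟩)
  · exact ⟨hG hadj, Rset_subset k hx⟩

lemma nonRigid_succ_subset (hG : G ≤ Q n) (k : ℕ) :
    nonRigid G v (k + 1) ⊆
      ({x | (Q n).dist v x = k} : Finset (V n)).biUnion
          (fun x => {w | (Q n).Adj x w ∧ ¬G.Adj x w}) ∪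
        (nonRigid G v k).biUnion (fun x => {w | (Q n).Adj x w}) := by
  intro w hw
  obtain ⟨x, hadj, hx, hmiss | hxB⟩ := exists_adj_of_mem_nonRigid_succ hG hw
  · exact mem_union_left _ (mem_biUnion.2 ⟨x, by simpa using hx, by simpa using ⟨hadj, hmiss⟩⟩)
  · exact mem_union_right _ (mem_biUnion.2 ⟨x, hxB, by simpa using hadj⟩)

lemma card_nonRigid_succ_le (hG : G ≤ Q n) {s : ℝ}
    (hdeg : ∀ x : V n, (n : ℝ) - s ≤ (G.neighborSet x).ncard) (k : ℕ) :
    (#(nonRigid G v (k + 1)) : ℝ) ≤ s * n.choose k + n * #(nonRigid G v k) := by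
  calc (#(nonRigid G v (k + 1)) : ℝ)
      ≤ ∑ x ∈ ({x | (Q n).dist v x = k} : Finset (V n)),
          (#{w | (Q n).Adj x w ∧ ¬G.Adj x w} : ℝ) +
        ∑ x ∈ nonRigid G v k, (#{w | (Q n).Adj x w} : ℝ) := by
        exact_mod_cast (Finset.card_le_card (nonRigid_succ_subset hG k)).trans
          ((Finset.card_union_le _ _).trans (add_le_add card_biUnion_le card_biUnion_le))
    _ ≤ ∑ x ∈ ({x | (Q n).dist v x = k} : Finset (V n)), s +
        ∑ x ∈ nonRigid G v k, (n : ℝ) := by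
        gcongr with x
        · exact card_missingEdges_le hG (hdeg x)
        · rw [card_Q_neighbors]
    _ = s * n.choose k + n * #(nonRigid G v k) := by
        simp only [sum_const, card_Q_sphere, nsmul_eq_mul]
        ring

end RigidSets

theorem rigid_sets_large_general
    (s : ℕ → ℕ)
    (n : ℕ) (G : SimpleGraph (V n)) (hG : G ≤ Q n)
    (hdeg : ∀ v : V n, (n : ℝ) - s n ≤ ((G.neighborSet v).ncard : ℝ)) :
    ∀ v : V n, ∀ k : ℕ, 1 ≤ k →
      (n.choose k : ℝ) - Real.exp 1 * (n : ℝ) ^ (k - 1) * s n ≤ ((Rset n G v k).ncard : ℝ) := by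
  intro v k hk
  obtain ⟨k, rfl⟩ := Nat.exists_eq_add_of_le' hk
  have hnonRigid : ((nonRigid G v (k + 1)).card : ℝ) ≤ Real.exp 1 * n ^ k * s n :=
    le_exp_one_mul_of_le_choose_add (b := fun j => (nonRigid G v j).card) (Nat.cast_nonneg _)
      (by simp [nonRigid_zero]) (card_nonRigid_succ_le hG hdeg) k
  have hsum := congrArg (Nat.cast : ℕ → ℝ) (ncard_Rset_add_card_nonRigid (G := G) (v := v) (k + 1))
  push_cast at hsum
  rw [Nat.add_sub_cancel]
  linarith

/-- Lemma 3.14 (krigid): if `G` is a spanning subgraph of `Q_n` with minimum degree at least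
`n - s(n)`, then `|R_k(v)| ≥ binom(n,k) - e·n^(k-1)·s(n)` for all `v` and `k ≥ 1`. -/
theorem rigid_sets_large
    (s : ℕ → ℕ) (hs : Tendsto s atTop atTop)
    (hso : (fun n => (s n : ℝ)) =o[atTop] fun n => (n : ℝ))
    (n : ℕ) (G : SimpleGraph (V n)) (hG : G ≤ Q n)
    (hdeg : ∀ v : V n, (n : ℝ) - s n ≤ ((G.neighborSet v).ncard : ℝ)) :
    ∀ v : V n, ∀ k : ℕ, 1 ≤ k →
      (n.choose k : ℝ) - Real.exp 1 * (n : ℝ) ^ (k - 1) * s n ≤ ((Rset n G v k).ncard : ℝ) :=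
  rigid_sets_large_general s n G hG hdeg
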